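/- arXiv:2507.19882 — 2 statements merged into one kernel-verified Lean document; each statement's English description precedes it below -/
import Mathlib

section
/- Let m ≥ 3, let Y ⊆ ℝ and N ⊆ ℝ^m be nonempty sets, and let f : Y × N × [0,1]^m → ℝ^m be a structural function such that (1) for every (y,n) ∈ Y × N the map u ↦ f(y,n,u) is injective and differentiable, with its Jacobian (derivative) at every point u ∈ [0,1]^m being a positive definite linear map; (2) g : ℝ^m → ℝ^m is injective and differentiable; (3) the pushforward of the uniform probability measure on [0,1]^m under the map q_{y,n} := u ↦ g(f(y,n,u)) is the same measure for all (y,n) ∈ Y × N (i.e., the latent variable g(x) is independent of (y,n)); and (4) there exist a function c : Y × N → ℝ with c(y,n) > 0 and a fixed orthogonal m×m matrix A such that for every (y,n) ∈ Y × N and every u ∈ [0,1]^m, the derivative of q_{y,n} at u equals the linear map v ↦ c(y,n)·(A v). Then there exists a single injective map q̃ : [0,1]^m → ℝ^m such that g(f(y,n,u)) = q̃(u) for all (y,n) ∈ Y × N and all u ∈ [0,1]^m. -/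
/-!
On the convex cube the map `q_{y,n} = g ∘ f y n` has constant derivative `c(y,n) • A`, so it is
affine there: `q_{y,n} u = c(y,n) • A u + b(y,n)`. The pushforward of the uniform measure under
such a map determines `c` and `b`: its mean is `c • A m̄ + b` (with `m̄` the centre of the cube) and
its second central moment is `c² ∫ ‖A (u - m̄)‖²`, which is positive because `A` is injective and
the uniform measure has no atoms. Hence `c` and `b`, and with them `q_{y,n}`, do not depend on
`(y, n)`.
-/

open MeasureTheory

theorem Matrix.toEuclideanLin_injective_of_mul_eq_one {𝕜 n : Type*} [RCLike 𝕜] [Fintype n]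
    [DecidableEq n] {A B : Matrix n n 𝕜} (h : B * A = 1) :
    Function.Injective (Matrix.toEuclideanLin A) :=
  Function.LeftInverse.injective (g := Matrix.toEuclideanLin B) fun v => by
    rw [← LinearMap.comp_apply, ← Matrix.toLpLin_mul, h, Matrix.toLpLin_one, LinearMap.id_apply]

theorem Convex.eq_add_of_hasFDerivWithinAt_eq {E F : Type*} [NormedAddCommGroup E]
    [NormedSpace ℝ E] [NormedAddCommGroup F] [NormedSpace ℝ F] {s : Set E} {f : E → F}
    {φ : E →L[ℝ] F} (hs : Convex ℝ s) (hf : ∀ x ∈ s, HasFDerivWithinAt f φ s x) {x y : E}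
    (hx : x ∈ s) (hy : y ∈ s) : f y = f x + φ (y - x) := by
  have h := hs.norm_image_sub_le_of_norm_hasFDerivWithin_le' hf
    (fun _ _ => (sub_self φ).symm ▸ norm_zero.le) hx hy
  rwa [zero_mul, norm_le_zero_iff, sub_sub, sub_eq_zero] at h

def unitCube (ι : Type*) : Set (EuclideanSpace ℝ ι) :=
  WithLp.ofLp ⁻¹' Set.univ.pi fun _ => Set.Icc 0 1

section unitCube
variable {ι : Type*}

theorem isCompact_unitCube : IsCompact (unitCube ι) :=
  (PiLp.homeomorph 2 fun _ : ι => ℝ).isCompact_preimage.mpr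
    (isCompact_univ_pi fun _ => isCompact_Icc)

theorem convex_unitCube : Convex ℝ (unitCube ι) :=
  (convex_pi fun _ _ => convex_Icc 0 1).linear_preimage
    (WithLp.linearEquiv 2 ℝ (ι → ℝ)).toLinearMap

theorem zero_mem_unitCube : (0 : EuclideanSpace ℝ ι) ∈ unitCube ι :=
  fun _ _ => by simp

theorem volume_unitCube [Fintype ι] : volume (unitCube ι) = 1 := by
  rw [unitCube, (PiLp.volume_preserving_ofLp ι).measure_preimage
    (MeasurableSet.univ_pi fun _ => measurableSet_Icc).nullMeasurableSet, volume_pi_pi]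
  simp

instance [Fintype ι] : IsProbabilityMeasure (volume.restrict (unitCube ι)) :=
  ⟨by rw [Measure.restrict_apply_univ, volume_unitCube]⟩

end unitCube

theorem IsCompact.memLp_id_restrict {E : Type*} [NormedAddCommGroup E] [MeasurableSpace E]
    [OpensMeasurableSpace E] {μ : Measure E} [IsFiniteMeasureOnCompacts μ] {s : Set E}
    (hs : IsCompact s) (p : ENNReal) : MemLp id p (μ.restrict s) := by
  have : IsFiniteMeasure (μ.restrict s) := isFiniteMeasure_restrict.mpr hs.measure_lt_top.ne
  obtain ⟨C, hC⟩ := hs.isBounded.exists_norm_le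
  exact .of_bound (continuousOn_id.aestronglyMeasurable_of_isCompact hs hs.measurableSet) C
    (ae_restrict_of_forall_mem hs.measurableSet hC)

section AffinePushforward

variable {E F : Type*} [NormedAddCommGroup E] [NormedSpace ℝ E] [MeasurableSpace E]
  [NormedAddCommGroup F] [NormedSpace ℝ F] {μ : Measure E} (L : E →L[ℝ] F)

theorem integral_id_map_smul_add [BorelSpace E] [CompleteSpace E] [MeasurableSpace F]
    [BorelSpace F] [CompleteSpace F] [SecondCountableTopology F] [IsProbabilityMeasure μ]
    (hμ : Integrable id μ) (c : ℝ) (b : F) :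
    ∫ y, y ∂μ.map (fun x => c • L x + b) = c • L (∫ x, x ∂μ) + b := by
  have hLμ : Integrable (fun x => c • L x) μ := (L.integrable_comp hμ).smul c
  rw [integral_map (f := fun y => y) (by fun_prop) aestronglyMeasurable_id,
    integral_add hLμ (integrable_const b), integral_const,
    probReal_univ, one_smul, integral_smul, L.integral_comp_comm (φ := fun x => x) hμ]

theorem integral_norm_sub_sq_map_smul_add [BorelSpace E] [MeasurableSpace F] [BorelSpace F]
    (c : ℝ) (b : F) (m : E) :
    ∫ y, ‖y - (c • L m + b)‖ ^ 2 ∂μ.map (fun x => c • L x + b) =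
      c ^ 2 * ∫ x, ‖L (x - m)‖ ^ 2 ∂μ := by
  rw [integral_map (by fun_prop) (by fun_prop : Continuous _).aestronglyMeasurable,
    ← integral_const_mul]
  congr 1 with x
  rw [add_sub_add_right_eq_sub, ← smul_sub, ← map_sub, norm_smul, mul_pow, Real.norm_eq_abs,
    sq_abs]

theorem integral_norm_sub_sq_pos [MeasurableSingletonClass E] [IsFiniteMeasure μ] [NeZero μ]
    [NullSingletonClass μ] (hμ : MemLp id 2 μ) (hL : Function.Injective L) (m : E) :
    0 < ∫ x, ‖L (x - m)‖ ^ 2 ∂μ := by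
  have hint : Integrable (fun x => ‖L (x - m)‖ ^ 2) μ :=
    ((hμ.sub (memLp_const m)).continuousLinearMap_comp L).integrable_norm_pow two_ne_zero
  have hsupp : Function.support (fun x => ‖L (x - m)‖ ^ 2) = {m}ᶜ := by
    ext x
    simp [sub_eq_zero, hL.eq_iff]
  rw [integral_pos_iff_support_of_nonneg (fun _ => by positivity) hint, hsupp,
    ← Measure.restrict_apply_univ, restrict_compl_singleton]
  exact Measure.measure_univ_pos.mpr (NeZero.ne μ)

theorem smul_add_params_eq_of_map_eq [BorelSpace E] [CompleteSpace E] [MeasurableSpace F]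
    [BorelSpace F] [CompleteSpace F] [SecondCountableTopology F] [IsProbabilityMeasure μ]
    [NullSingletonClass μ] (hμ : MemLp id 2 μ) (hL : Function.Injective L) {c₁ c₂ : ℝ}
    (hc₁ : 0 ≤ c₁) (hc₂ : 0 ≤ c₂) {b₁ b₂ : F}
    (h : μ.map (fun x => c₁ • L x + b₁) = μ.map (fun x => c₂ • L x + b₂)) :
    c₁ = c₂ ∧ b₁ = b₂ := by
  set m := ∫ x, x ∂μ
  have hmean : c₁ • L m + b₁ = c₂ • L m + b₂ := by
    rw [← integral_id_map_smul_add L (hμ.integrable one_le_two), h,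
      integral_id_map_smul_add L (hμ.integrable one_le_two)]
  have hspread : c₁ ^ 2 * ∫ x, ‖L (x - m)‖ ^ 2 ∂μ = c₂ ^ 2 * ∫ x, ‖L (x - m)‖ ^ 2 ∂μ := by
    rw [← integral_norm_sub_sq_map_smul_add, h, hmean, integral_norm_sub_sq_map_smul_add]
  have hc : c₁ = c₂ := (pow_left_inj₀ hc₁ hc₂ two_ne_zero).mp
    (mul_right_cancel₀ (integral_norm_sub_sq_pos L hμ hL m).ne' hspread)
  exact ⟨hc, add_left_cancel (hc ▸ hmean)⟩

theorem eqOn_of_map_restrict_eq_of_eqOn_smul_add [BorelSpace E] [CompleteSpace E]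
    [MeasurableSpace F] [BorelSpace F] [CompleteSpace F] [SecondCountableTopology F]
    [NullSingletonClass μ] {s : Set E} (hs : MeasurableSet s) [IsProbabilityMeasure (μ.restrict s)]
    (hμ : MemLp id 2 (μ.restrict s)) (hL : Function.Injective L) {q₁ q₂ : E → F} {c₁ c₂ : ℝ}
    (hc₁ : 0 ≤ c₁) (hc₂ : 0 ≤ c₂) {b₁ b₂ : F} (hq₁ : s.EqOn q₁ fun x => c₁ • L x + b₁)
    (hq₂ : s.EqOn q₂ fun x => c₂ • L x + b₂) (h : (μ.restrict s).map q₁ = (μ.restrict s).map q₂) :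
    s.EqOn q₁ q₂ := by
  have hmap {q : E → F} {c : ℝ} {b : F} (hq : s.EqOn q fun x => c • L x + b) :
      (μ.restrict s).map q = (μ.restrict s).map fun x => c • L x + b :=
    Measure.map_congr (ae_restrict_of_forall_mem hs hq)
  obtain ⟨rfl, rfl⟩ := smul_add_params_eq_of_map_eq L hμ hL hc₁ hc₂
    (by rw [← hmap hq₁, ← hmap hq₂, h])
  exact hq₁.trans hq₂.symm

end AffinePushforward

theorem latent_identifiability_general
    (m : ℕ) (hm : 3 ≤ m)
    (Y : Set ℝ) (N : Set (EuclideanSpace ℝ (Fin m)))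
    (hY : Y.Nonempty) (hN : N.Nonempty)
    (f : ℝ → EuclideanSpace ℝ (Fin m) → EuclideanSpace ℝ (Fin m) →
      EuclideanSpace ℝ (Fin m))
    (g : EuclideanSpace ℝ (Fin m) → EuclideanSpace ℝ (Fin m))
    (cube : Set (EuclideanSpace ℝ (Fin m)))
    (hcube : cube = {u | ∀ i : Fin m, u i ∈ Set.Icc (0 : ℝ) 1})
    -- condition (1): `f y n` is injective and differentiable with positive definite Jacobian
    (hf_inj : ∀ y ∈ Y, ∀ n ∈ N, Set.InjOn (f y n) cube)
    -- condition (2): `g` is injective and differentiable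
    (hg_inj : Function.Injective g)
    -- condition (3): the latent `g x` is independent of the parents `(y, n)`:
    -- the pushforward of the uniform probability measure on the cube under
    -- `u ↦ g (f y n u)` is the same for all `(y, n) ∈ Y × N`
    (hindep : ∀ y₁ ∈ Y, ∀ n₁ ∈ N, ∀ y₂ ∈ Y, ∀ n₂ ∈ N,
      Measure.map (fun u => g (f y₁ n₁ u)) (volume.restrict cube) =
        Measure.map (fun u => g (f y₂ n₂ u)) (volume.restrict cube))
    -- condition (4): the derivative of `q_{y,n} := u ↦ g (f y n u)` equals `c y n • A`
    -- with `c y n > 0` and `A` a fixed orthogonal matrix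
    (c : ℝ → EuclideanSpace ℝ (Fin m) → ℝ)
    (hc : ∀ y ∈ Y, ∀ n ∈ N, 0 < c y n)
    (A : Matrix (Fin m) (Fin m) ℝ) (hA : A.transpose * A = 1)
    (hq_deriv : ∀ y ∈ Y, ∀ n ∈ N, ∀ u ∈ cube,
      HasFDerivAt (fun u => g (f y n u))
        (c y n • (LinearMap.toContinuousLinearMap (Matrix.toEuclideanLin A))) u) :
    ∃ qt : EuclideanSpace ℝ (Fin m) → EuclideanSpace ℝ (Fin m),
      Set.InjOn qt cube ∧ ∀ y ∈ Y, ∀ n ∈ N, ∀ u ∈ cube, g (f y n u) = qt u := by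
  obtain ⟨y₀, hy₀⟩ := hY
  obtain ⟨n₀, hn₀⟩ := hN
  obtain rfl : cube = unitCube (Fin m) := hcube.trans <| Set.ext fun _ => Set.mem_univ_pi.symm
  -- so that `volume` on `EuclideanSpace ℝ (Fin m)` has no atoms
  have : Nonempty (Fin m) := ⟨⟨0, by omega⟩⟩
  set L := LinearMap.toContinuousLinearMap (Matrix.toEuclideanLin A)
  have hL : Function.Injective L := Matrix.toEuclideanLin_injective_of_mul_eq_one hA
  have haffine : ∀ y ∈ Y, ∀ n ∈ N,
      (unitCube (Fin m)).EqOn (fun u => g (f y n u)) fun u => c y n • L u + g (f y n 0) :=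
    fun y hy n hn u hu => by
      simpa only [sub_zero, FunLike.coe_smul, Pi.smul_apply, add_comm] using
        convex_unitCube.eq_add_of_hasFDerivWithinAt_eq
          (fun v hv => (hq_deriv y hy n hn v hv).hasFDerivWithinAt) zero_mem_unitCube hu
  refine ⟨fun u => g (f y₀ n₀ u), fun a ha b hb hab => hf_inj y₀ hy₀ n₀ hn₀ ha hb (hg_inj hab),
    fun y hy n hn => ?_⟩
  exact eqOn_of_map_restrict_eq_of_eqOn_smul_add L isCompact_unitCube.measurableSet
    (isCompact_unitCube.memLp_id_restrict 2) hL (hc y hy n hn).le (hc y₀ hy₀ n₀ hn₀).le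
    (haffine y hy n hn) (haffine y₀ hy₀ n₀ hn₀) (hindep y hy n hn y₀ hy₀ n₀ hn₀)

/-- **Theorem 1.** In the structural causal model `x = f(y, n, u)` with exogenous noise `u`
uniform on the cube `[0,1]^m` (`m ≥ 3`), suppose:
(1) for each `(y, n) ∈ Y × N` the map `u ↦ f y n u` is injective on the cube and
differentiable, with positive definite Jacobian `f' y n u` at every `u` in the cube;
(2) the forward map `g` is injective and differentiable;
(3) the pushforward of the uniform measure on the cube under `u ↦ g (f y n u)` does not
depend on `(y, n)` (independence of the latent from the parents);
(4) the derivative of `u ↦ g (f y n u)` at each point of the cube equals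
`c y n • A` with a positive scalar `c y n` and a fixed orthogonal matrix `A`.
Then there is a single injective map `q̃` on the cube with `g (f y n u) = q̃ u` for all
`y ∈ Y`, `n ∈ N`, `u` in the cube. -/
theorem latent_identifiability
    (m : ℕ) (hm : 3 ≤ m)
    (Y : Set ℝ) (N : Set (EuclideanSpace ℝ (Fin m)))
    (hY : Y.Nonempty) (hN : N.Nonempty)
    (f : ℝ → EuclideanSpace ℝ (Fin m) → EuclideanSpace ℝ (Fin m) →
      EuclideanSpace ℝ (Fin m))
    (g : EuclideanSpace ℝ (Fin m) → EuclideanSpace ℝ (Fin m))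
    (cube : Set (EuclideanSpace ℝ (Fin m)))
    (hcube : cube = {u | ∀ i : Fin m, u i ∈ Set.Icc (0 : ℝ) 1})
    -- condition (1): `f y n` is injective and differentiable with positive definite Jacobian
    (f' : ℝ → EuclideanSpace ℝ (Fin m) → EuclideanSpace ℝ (Fin m) →
      (EuclideanSpace ℝ (Fin m) →L[ℝ] EuclideanSpace ℝ (Fin m)))
    (hf_inj : ∀ y ∈ Y, ∀ n ∈ N, Set.InjOn (f y n) cube)
    (hf_deriv : ∀ y ∈ Y, ∀ n ∈ N, ∀ u ∈ cube, HasFDerivAt (f y n) (f' y n u) u)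
    (hf_pos : ∀ y ∈ Y, ∀ n ∈ N, ∀ u ∈ cube,
      ∀ v : EuclideanSpace ℝ (Fin m), v ≠ 0 → 0 < (inner ℝ (f' y n u v) v : ℝ))
    -- condition (2): `g` is injective and differentiable
    (hg_inj : Function.Injective g)
    (hg_diff : Differentiable ℝ g)
    -- condition (3): the latent `g x` is independent of the parents `(y, n)`:
    -- the pushforward of the uniform probability measure on the cube under
    -- `u ↦ g (f y n u)` is the same for all `(y, n) ∈ Y × N`
    (hindep : ∀ y₁ ∈ Y, ∀ n₁ ∈ N, ∀ y₂ ∈ Y, ∀ n₂ ∈ N,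
      Measure.map (fun u => g (f y₁ n₁ u)) (volume.restrict cube) =
        Measure.map (fun u => g (f y₂ n₂ u)) (volume.restrict cube))
    -- condition (4): the derivative of `q_{y,n} := u ↦ g (f y n u)` equals `c y n • A`
    -- with `c y n > 0` and `A` a fixed orthogonal matrix
    (c : ℝ → EuclideanSpace ℝ (Fin m) → ℝ)
    (hc : ∀ y ∈ Y, ∀ n ∈ N, 0 < c y n)
    (A : Matrix (Fin m) (Fin m) ℝ) (hA : A.transpose * A = 1)
    (hq_deriv : ∀ y ∈ Y, ∀ n ∈ N, ∀ u ∈ cube,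
      HasFDerivAt (fun u => g (f y n u))
        (c y n • (LinearMap.toContinuousLinearMap (Matrix.toEuclideanLin A))) u) :
    ∃ qt : EuclideanSpace ℝ (Fin m) → EuclideanSpace ℝ (Fin m),
      Set.InjOn qt cube ∧ ∀ y ∈ Y, ∀ n ∈ N, ∀ u ∈ cube, g (f y n u) = qt u :=
  latent_identifiability_general m hm Y N hY hN f g cube hcube hf_inj hg_inj hindep c hc A hA
    hq_deriv
end

section
/- Let Y, N, U, X, L be nonempty sets and let f : Y × N × U → X, g : X → L, h : L × Y × N → X be functions. Assume there exists an injective map q̃ : U → L such that g(f(y,n,u)) = q̃(u) for all (y,n,u) ∈ Y × N × U, and assume the reconstruction identity h(g(x), y, n) = x holds for every x of the form x = f(y,n,u) (i.e., h(g(f(y,n,u)), y, n) = f(y,n,u) for all (y,n,u)). Then for every (y,n,u) ∈ Y × N × U and every counterfactual label y^{cf} ∈ Y, the counterfactual estimate h(g(f(y,n,u)), y^{cf}, n) equals the true counterfactual outcome f(y^{cf}, n, u). -/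
/-- **Corollary 1.** If the latent recovered by the forward map `g` from the factual
outcome `f y n u` is an injective function `q̃` of the exogenous noise `u` alone, and the
reverse map `h` reconstructs every factual outcome, then for any counterfactual label
`ycf` the counterfactual estimate `h (g (f y n u)) ycf n` equals the true counterfactual
outcome `f ycf n u`. -/
theorem counterfactual_recovery
    (Y N U X L : Type*) [Nonempty Y] [Nonempty N] [Nonempty U] [Nonempty X] [Nonempty L]
    (f : Y → N → U → X) (g : X → L) (h : L → Y → N → X)
    (qt : U → L) (hqt : Function.Injective qt)
    (hgf : ∀ (y : Y) (n : N) (u : U), g (f y n u) = qt u)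
    (hrec : ∀ (y : Y) (n : N) (u : U), h (g (f y n u)) y n = f y n u) :
    ∀ (y : Y) (n : N) (u : U) (ycf : Y), h (g (f y n u)) ycf n = f ycf n u := by
  intro y n u ycf
  rw [hgf y n u, ← hgf ycf n u, hrec ycf n u]
end
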